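/- arXiv:2008.03299 — 3 statements merged into one kernel-verified Lean document; each statement's English description precedes it below -/
import Mathlib

section
/- Let 𝒜 be the activation sheaf on a finite abstract simplicial complex X and s a global section. Then for every node n, the active region active(s,n) = {a ∈ X : s(a) = n} is a closed subcomplex of X (it contains every face of each of its simplices), it is connected, and if nonempty at n's vertex then n ∈ active(s,n). -/
open scoped Classical

/-- An abstract simplicial complex: a family of nonempty finite subsets of a vertex set,
closed under nonempty subsets. -/
def IsASC {N : Type} (K : Set (Finset N)) : Prop :=
  (∀ s ∈ K, s.Nonempty) ∧ ∀ s ∈ K, ∀ t : Finset N, t ⊆ s → t.Nonempty → t ∈ K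

/-- A simplex `c` and a node `n` have a coface in common in `K`. -/
def CommonCoface {N : Type} (K : Set (Finset N)) (c : Finset N) (n : N) : Prop :=
  ∃ d ∈ K, c ⊆ d ∧ n ∈ d

/-- The stalk of the activation sheaf at a simplex `c` is
`𝒜(c) = {n : CommonCoface K c n} ∪ {⊥}`; we model it as `Option N`, with `none` playing
the role of `⊥`.  The restriction map `𝒜(c ⊆ d)` sends `n` to `n` if `n ∈ 𝒜(d)` and to
`⊥` otherwise. -/
noncomputable def sheafRestrict {N : Type} (K : Set (Finset N)) (d : Finset N) :
    Option N → Option N :=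
  fun x => x.bind fun m => if CommonCoface K d m then some m else none

/-- A global section of the activation sheaf `𝒜` on `K`: a choice `s(c) ∈ 𝒜(c)` for each
simplex `c ∈ K`, compatible with the restriction maps. -/
def IsGlobalSection {N : Type} (K : Set (Finset N)) (s : Finset N → Option N) : Prop :=
  (∀ c ∈ K, ∀ m : N, s c = some m → CommonCoface K c m) ∧
  (∀ c ∈ K, ∀ d ∈ K, c ⊆ d → s d = sheafRestrict K d (s c))

/-- The active region `active(s,n) = {a ∈ X : s(a) = n}` of a node `n` in a section. -/
def activeRegion {N : Type} (K : Set (Finset N)) (s : Finset N → Option N) (n : N) :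
    Set (Finset N) :=
  {a ∈ K | s a = some n}

/-- A subset `Y` of a simplicial complex is connected if any two of its simplices are
joined by a chain of simplices of `Y`, consecutive ones comparable under the face
relation. -/
def IsConnectedSub {N : Type} (Y : Set (Finset N)) : Prop :=
  ∀ a ∈ Y, ∀ b ∈ Y,
    Relation.ReflTransGen (fun u v : Finset N => u ∈ Y ∧ v ∈ Y ∧ (u ⊆ v ∨ v ⊆ u)) a b

/-- The active region of a node is a connected, closed subset of `X` that contains `n`:
it contains every (nonempty) face of each of its simplices, it is connected, and if it
is nonempty then it contains the vertex `n`. -/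
theorem active_region_closed_connected {N : Type} [Fintype N] [DecidableEq N]
    (K : Set (Finset N)) (hK : IsASC K) (s : Finset N → Option N)
    (hs : IsGlobalSection K s) (n : N) :
    (∀ a ∈ activeRegion K s n, ∀ b : Finset N, b ⊆ a → b.Nonempty →
      b ∈ activeRegion K s n) ∧
    IsConnectedSub (activeRegion K s n) ∧
    ((activeRegion K s n).Nonempty → ({n} : Finset N) ∈ activeRegion K s n) := by
  obtain ⟨hs1, hs2⟩ := hs
  -- forcing lemma: if c ⊆ d, both in K, and s d = some n, then s c = some n
  have force : ∀ c ∈ K, ∀ d ∈ K, c ⊆ d → s d = some n → s c = some n := by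
    intro c hc d hd hcd hsd
    have h := hs2 c hc d hd hcd
    rw [hsd] at h
    cases hsc : s c with
    | none => rw [hsc] at h; simp [sheafRestrict] at h
    | some m =>
      rw [hsc] at h
      simp only [sheafRestrict, Option.bind_some] at h
      by_cases hm : CommonCoface K d m
      · rw [if_pos hm] at h
        exact h.symm
      · rw [if_neg hm] at h; exact absurd h (by simp)
  -- closedness
  have closed : ∀ a ∈ activeRegion K s n, ∀ b : Finset N, b ⊆ a → b.Nonempty →
      b ∈ activeRegion K s n := by
    rintro a ⟨haK, han⟩ b hba hb
    have hbK : b ∈ K := hK.2 a haK b hba hb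
    exact ⟨hbK, force b hbK a haK hba han⟩
  -- key: every active simplex has an active coface containing n, and {n} is active
  have key : ∀ a ∈ activeRegion K s n, ∃ d ∈ activeRegion K s n,
      a ⊆ d ∧ ({n} : Finset N) ∈ activeRegion K s n ∧ ({n} : Finset N) ⊆ d := by
    rintro a ⟨haK, han⟩
    obtain ⟨d, hdK, had, hnd⟩ := hs1 a haK n han
    have hsd : s d = some n := by
      have h := hs2 a haK d hdK had
      rw [han] at h
      simp only [sheafRestrict, Option.bind_some] at h
      rw [if_pos ⟨d, hdK, subset_rfl, hnd⟩] at h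
      exact h
    have hnsub : ({n} : Finset N) ⊆ d := Finset.singleton_subset_iff.mpr hnd
    have hnK : ({n} : Finset N) ∈ K := hK.2 d hdK _ hnsub ⟨n, Finset.mem_singleton_self n⟩
    exact ⟨d, ⟨hdK, hsd⟩, had, ⟨hnK, force _ hnK d hdK hnsub hsd⟩, hnsub⟩
  refine ⟨closed, ?_, ?_⟩
  · intro a ha b hb
    obtain ⟨d, hd, had, hnA, hnd⟩ := key a ha
    obtain ⟨e, he, hbe, -, hne⟩ := key b hb
    exact .trans (.single ⟨ha, hd, Or.inl had⟩)
      (.trans (.single ⟨hd, hnA, Or.inr hnd⟩)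
        (.trans (.single ⟨hnA, he, Or.inl hne⟩) (.single ⟨he, hb, Or.inr hbe⟩)))
  · rintro ⟨a, ha⟩
    obtain ⟨-, -, -, hnA, -⟩ := key a ha
    exact hnA
end

section
/- Let 𝒜 be an activation sheaf on a finite simplicial complex X and s a global section. If c is in the star of the active region of node n but not in active(s,n), then s(c) = ⊥. In particular, the star of the active region of a node does not intersect the active region of any other node. -/
open scoped Classical

/-- The star of a subset `A` of a simplicial complex `K`: all simplices of `K` having a
face in `A`. -/
def star {N : Type} (K : Set (Finset N)) (A : Set (Finset N)) : Set (Finset N) :=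
  {c ∈ K | ∃ a ∈ A, a ⊆ c}

theorem sheafRestrict_eq_self_or_eq_none {N : Type} (K : Set (Finset N)) (d : Finset N)
    (x : Option N) : sheafRestrict K d x = x ∨ sheafRestrict K d x = none := by
  cases x with
  | none => exact Or.inl rfl
  | some m => by_cases h : CommonCoface K d m <;> simp [sheafRestrict, h]

theorem IsGlobalSection.eq_or_eq_none_of_subset {N : Type} {K : Set (Finset N)}
    {s : Finset N → Option N} (hs : IsGlobalSection K s) {c d : Finset N} (hc : c ∈ K)
    (hd : d ∈ K) (hcd : c ⊆ d) : s d = s c ∨ s d = none := by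
  rw [hs.2 c hc d hd hcd]
  exact sheafRestrict_eq_self_or_eq_none K d (s c)

theorem IsGlobalSection.eq_none_or_mem_activeRegion_of_mem_star {N : Type}
    {K : Set (Finset N)} {s : Finset N → Option N} (hs : IsGlobalSection K s) {n : N}
    {c : Finset N} (hc : c ∈ star K (activeRegion K s n)) :
    s c = none ∨ c ∈ activeRegion K s n := by
  obtain ⟨hcK, a, ⟨haK, hsa⟩, hac⟩ := hc
  rcases hs.eq_or_eq_none_of_subset haK hcK hac with h | h
  · exact Or.inr ⟨hcK, h.trans hsa⟩
  · exact Or.inl h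

theorem star_of_active_region_general {N : Type}
    (K : Set (Finset N)) (s : Finset N → Option N)
    (hs : IsGlobalSection K s) (n : N) :
    (∀ c ∈ star K (activeRegion K s n), c ∉ activeRegion K s n → s c = none) ∧
    (∀ m : N, m ≠ n →
      star K (activeRegion K s n) ∩ activeRegion K s m = ∅) := by
  refine ⟨fun c hc hcn => (hs.eq_none_or_mem_activeRegion_of_mem_star hc).resolve_right hcn,
    fun m hmn => Set.eq_empty_of_forall_notMem fun c ⟨hc, _, hcm⟩ => ?_⟩
  rcases hs.eq_none_or_mem_activeRegion_of_mem_star hc with h | ⟨_, hcn⟩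
  · simp [hcm] at h
  · exact hmn (Option.some.inj (hcm.symm.trans hcn))

/-- If `c` is in the star of the active region of node `n` but not in `active(s,n)`,
then `s(c) = ⊥`.  In particular, the star of the active region of a node does not
intersect the active region of any other node. -/
theorem star_of_active_region {N : Type} [Fintype N] [DecidableEq N]
    (K : Set (Finset N)) (hK : IsASC K) (s : Finset N → Option N)
    (hs : IsGlobalSection K s) (n : N) :
    (∀ c ∈ star K (activeRegion K s n), c ∉ activeRegion K s n → s c = none) ∧
    (∀ m : N, m ≠ n →
      star K (activeRegion K s n) ∩ activeRegion K s m = ∅) :=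
  star_of_active_region_general K s hs n
end

section
/- Active regions are section-independent: if r and s are global sections of an activation sheaf 𝒜 on a finite simplicial complex X, and both active(r,n) and active(s,n) are nonempty, then active(r,n) = active(s,n). -/
open scoped Classical

lemma activeRegion_eq_commonCoface {N : Type} (K : Set (Finset N)) (hK : IsASC K)
    (s : Finset N → Option N) (hs : IsGlobalSection K s) (n : N)
    (hne : (activeRegion K s n).Nonempty) :
    activeRegion K s n = {a ∈ K | CommonCoface K a n} := by
  obtain ⟨a, haK, has⟩ := hne
  -- get a coface d of a containing n, with s d = some n
  obtain ⟨d, hdK, had, hnd⟩ := hs.1 a haK n has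
  have hdn : CommonCoface K d n := ⟨d, hdK, subset_rfl, hnd⟩
  have hsd : s d = some n := by
    have := hs.2 a haK d hdK had
    rw [this, has]
    simp [sheafRestrict, hdn]
  -- {n} is in K and s {n} = some n
  have hnK : ({n} : Finset N) ∈ K :=
    hK.2 d hdK {n} (Finset.singleton_subset_iff.mpr hnd) ⟨n, Finset.mem_singleton_self n⟩
  have hsn : s {n} = some n := by
    have h := hs.2 {n} hnK d hdK (Finset.singleton_subset_iff.mpr hnd)
    rw [hsd] at h
    cases hx : s {n} with
    | none => simp [sheafRestrict, hx] at h
    | some m =>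
      rw [hx] at h
      by_cases hc : CommonCoface K d m <;> simp [sheafRestrict, hc] at h
      exact congrArg some h.symm
  ext b
  constructor
  · rintro ⟨hbK, hbs⟩
    exact ⟨hbK, hs.1 b hbK n hbs⟩
  · rintro ⟨hbK, e, heK, hbe, hne'⟩
    have hen : CommonCoface K e n := ⟨e, heK, subset_rfl, hne'⟩
    have hse : s e = some n := by
      have := hs.2 {n} hnK e heK (Finset.singleton_subset_iff.mpr hne')
      rw [this, hsn]
      simp [sheafRestrict, hen]
    have h := hs.2 b hbK e heK hbe
    rw [hse] at h
    refine ⟨hbK, ?_⟩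
    cases hx : s b with
    | none => simp [sheafRestrict, hx] at h
    | some m =>
      rw [hx] at h
      by_cases hc : CommonCoface K e m <;> simp [sheafRestrict, hc] at h
      exact congrArg some h.symm

/-- Active regions are section-independent: if `r` and `s` are global sections of an
activation sheaf `𝒜` on a finite simplicial complex `X`, and both `active(r,n)` and
`active(s,n)` are nonempty, then `active(r,n) = active(s,n)`. -/
theorem active_region_section_independent {N : Type} [Fintype N] [DecidableEq N]
    (K : Set (Finset N)) (hK : IsASC K) (r s : Finset N → Option N)
    (hr : IsGlobalSection K r) (hs : IsGlobalSection K s) (n : N)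
    (hne_r : (activeRegion K r n).Nonempty) (hne_s : (activeRegion K s n).Nonempty) :
    activeRegion K r n = activeRegion K s n := by
  rw [activeRegion_eq_commonCoface K hK r hr n hne_r, activeRegion_eq_commonCoface K hK s hs n hne_s]
end
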